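/- Let d be a positive integer, α ∈ (0,2), s ≥ 0, and let β > 0 satisfy 1/β + s/α < (d+α)/α. Define w_t(x) = t^{-1/β}(1 + t^{-s/α}) W(t^{-1/α}|x|), where W(r) = log(e + r²)/(1 + r^{d+α}). Let c₁ > 0 and let D : ℝ^d → ℝ be any function satisfying D(u) ≤ c₁/(1 + |u|^{d+α}) for all u with |u| ≥ 2. Then there exists R₁ ≥ 2, depending only on d, α, β, s and c₁, such that for all t > 0 and x ∈ ℝ^d with t^{-1/α}|x| ≥ R₁, ∂_t w_t(x) − t^{-1/β − 1}(1 + t^{-s/α}) D(t^{-1/α} x) ≥ 0. -/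

import Mathlib

open Set

/-- The profile function `W(r) = log(e + r²)/(1 + r^{d+α})`. -/
noncomputable def Wfn (d : ℕ) (α r : ℝ) : ℝ :=
  Real.log (Real.exp 1 + r ^ 2) / (1 + r ^ ((d : ℝ) + α))

/-- `w_t(x) = t^{-1/β}(1 + t^{-s/α}) W(t^{-1/α}|x|)`. -/
noncomputable def wfn (d : ℕ) (α β s t : ℝ) (x : EuclideanSpace ℝ (Fin d)) : ℝ :=
  t ^ (-(1:ℝ)/β) * (1 + t ^ (-s/α)) * Wfn d α (t ^ (-(1:ℝ)/α) * ‖x‖)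

open Filter Topology

/-! Writing `ρ = t^{-1/α}|x|` and `θ = t^{-s/α}`, the chain rule gives
`∂_t w_t(x) = t^{-1/β-1} (-(1/β)(1+θ) W(ρ) - (s/α) θ W(ρ) - (1+θ) ρ W'(ρ)/α)`,
so, as `W ≥ 0` and `s ≥ 0`, it suffices that `γ W(ρ) + ρ W'(ρ)/α + c₁/(1+ρ^{d+α}) ≤ 0` for large `ρ`,
where `γ = 1/β + s/α`. Since `ρ W'(ρ) ≈ -(d+α) W(ρ)`, this reduces to
`log(e+ρ²) · ((d+α)/α · ρ^{d+α}/(1+ρ^{d+α}) - γ) ≥ 2/α + c₁`, and the left side tends to `∞`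
because `γ < (d+α)/α`. -/

lemma Wfn_nonneg (d : ℕ) (α : ℝ) {ρ : ℝ} (hρ : 0 ≤ ρ) : 0 ≤ Wfn d α ρ := by
  have hlog : 0 ≤ Real.log (Real.exp 1 + ρ ^ 2) :=
    Real.log_nonneg (by nlinarith [Real.add_one_le_exp 1])
  exact div_nonneg hlog (by positivity)

lemma hasDerivAt_Wfn (d : ℕ) (α : ℝ) {ρ : ℝ} (hρ : 0 < ρ) :
    HasDerivAt (Wfn d α)
      ((2 * ρ / (Real.exp 1 + ρ ^ 2) * (1 + ρ ^ ((d : ℝ) + α)) -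
          Real.log (Real.exp 1 + ρ ^ 2) * (((d : ℝ) + α) * ρ ^ ((d : ℝ) + α - 1))) /
        (1 + ρ ^ ((d : ℝ) + α)) ^ 2) ρ := by
  have hnum : HasDerivAt (fun y : ℝ => Real.log (Real.exp 1 + y ^ 2))
      (2 * ρ / (Real.exp 1 + ρ ^ 2)) ρ := by
    simpa using ((hasDerivAt_pow 2 ρ).const_add (Real.exp 1)).log (by positivity)
  have hden : HasDerivAt (fun y : ℝ => 1 + y ^ ((d : ℝ) + α))
      (((d : ℝ) + α) * ρ ^ ((d : ℝ) + α - 1)) ρ :=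
    (Real.hasDerivAt_rpow_const (Or.inl hρ.ne')).const_add 1
  exact hnum.div hden (by positivity)

lemma mul_deriv_Wfn (d : ℕ) (α : ℝ) {ρ : ℝ} (hρ : 0 < ρ) :
    ρ * deriv (Wfn d α) ρ =
      2 * ρ ^ 2 / ((Real.exp 1 + ρ ^ 2) * (1 + ρ ^ ((d : ℝ) + α))) -
        ((d : ℝ) + α) * Real.log (Real.exp 1 + ρ ^ 2) * ρ ^ ((d : ℝ) + α) /
          (1 + ρ ^ ((d : ℝ) + α)) ^ 2 := by
  rw [(hasDerivAt_Wfn d α hρ).deriv, Real.rpow_sub hρ, Real.rpow_one]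
  field_simp

lemma tendsto_log_mul_rpow_ratio_sub_atTop (d : ℕ) {α γ : ℝ} (hα : 0 < α) (hγ : γ < ((d : ℝ) + α) / α) :
    Tendsto (fun ρ : ℝ => Real.log (Real.exp 1 + ρ ^ 2) *
      (((d : ℝ) + α) / α * (ρ ^ ((d : ℝ) + α) / (1 + ρ ^ ((d : ℝ) + α))) - γ)) atTop atTop := by
  have hpow : Tendsto (fun ρ : ℝ => 1 + ρ ^ ((d : ℝ) + α)) atTop atTop :=
    tendsto_atTop_add_const_left _ 1 (tendsto_rpow_atTop (by positivity))
  have hratio : Tendsto (fun ρ : ℝ => ρ ^ ((d : ℝ) + α) / (1 + ρ ^ ((d : ℝ) + α))) atTop (𝓝 1) := by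
    have h := (tendsto_const_nhds (x := (1 : ℝ))).sub hpow.inv_tendsto_atTop
    rw [sub_zero] at h
    refine h.congr' (eventually_of_mem (Ioi_mem_atTop 0) fun ρ hρ => ?_)
    have : 0 < 1 + ρ ^ ((d : ℝ) + α) := by
      have := Real.rpow_pos_of_pos (mem_Ioi.mp hρ) ((d : ℝ) + α); linarith
    simp only [Pi.inv_apply]
    field_simp
    ring
  have hlog : Tendsto (fun ρ : ℝ => Real.log (Real.exp 1 + ρ ^ 2)) atTop atTop :=
    Real.tendsto_log_atTop.comp
      (tendsto_atTop_add_const_left _ _ (tendsto_pow_atTop two_ne_zero))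
  refine hlog.atTop_mul_pos (C := ((d : ℝ) + α) / α - γ) (by linarith) ?_
  simpa using (hratio.const_mul (((d : ℝ) + α) / α)).sub_const γ

lemma eventually_Wfn_supersolution (d : ℕ) {α γ : ℝ} (hα : 0 < α)
    (hγ : γ < ((d : ℝ) + α) / α) (c : ℝ) :
    ∀ᶠ ρ in atTop, γ * Wfn d α ρ + ρ * deriv (Wfn d α) ρ / α +
      c / (1 + ρ ^ ((d : ℝ) + α)) ≤ 0 := by
  filter_upwards [(tendsto_log_mul_rpow_ratio_sub_atTop d hα hγ).eventually_ge_atTop (2 / α + c),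
    Ioi_mem_atTop 0] with ρ hgap hρ
  rw [mem_Ioi] at hρ
  rw [mul_deriv_Wfn d α hρ, Wfn]
  set E := Real.exp 1 + ρ ^ 2
  set L := Real.log E
  set P := ρ ^ ((d : ℝ) + α)
  have hP : 0 < P := Real.rpow_pos_of_pos hρ _
  have hE : ρ ^ 2 < E := lt_add_of_pos_left _ (Real.exp_pos 1)
  have hρE : 2 * ρ ^ 2 / (E * (1 + P)) ≤ 2 / (1 + P) := by
    rw [div_le_div_iff₀ (by positivity) (by positivity)]
    nlinarith
  have key : γ * (L / (1 + P)) + (2 / (1 + P) - (d + α) * L * P / (1 + P) ^ 2) / α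
      + c / (1 + P) = (2 / α + c - L * ((d + α) / α * (P / (1 + P)) - γ)) / (1 + P) := by
    field_simp
    ring
  calc γ * (L / (1 + P)) + (2 * ρ ^ 2 / (E * (1 + P)) - (d + α) * L * P / (1 + P) ^ 2) / α
        + c / (1 + P)
      ≤ γ * (L / (1 + P)) + (2 / (1 + P) - (d + α) * L * P / (1 + P) ^ 2) / α
        + c / (1 + P) := by
        gcongr
    _ ≤ 0 := by
        rw [key]
        exact div_nonpos_of_nonpos_of_nonneg (by linarith) (by positivity)

lemma hasDerivAt_wfn (d : ℕ) (α β s : ℝ) {t : ℝ} (ht : 0 < t) (x : EuclideanSpace ℝ (Fin d))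
    (hW : DifferentiableAt ℝ (Wfn d α) (t ^ (-(1:ℝ)/α) * ‖x‖)) :
    HasDerivAt (fun τ => wfn d α β s τ x)
      (t ^ (-(1:ℝ)/β - 1) *
        (-(1 / β) * (1 + t ^ (-s/α)) * Wfn d α (t ^ (-(1:ℝ)/α) * ‖x‖)
          - s / α * t ^ (-s/α) * Wfn d α (t ^ (-(1:ℝ)/α) * ‖x‖)
          - (1 + t ^ (-s/α)) * ((t ^ (-(1:ℝ)/α) * ‖x‖) *
              deriv (Wfn d α) (t ^ (-(1:ℝ)/α) * ‖x‖)) / α)) t := by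
  have hpow (p : ℝ) : HasDerivAt (fun τ : ℝ => τ ^ p) (p * t ^ (p - 1)) t :=
    Real.hasDerivAt_rpow_const (Or.inl ht.ne')
  have hρ : HasDerivAt (fun τ : ℝ => τ ^ (-(1:ℝ)/α) * ‖x‖)
      (-(1:ℝ)/α * t ^ (-(1:ℝ)/α - 1) * ‖x‖) t := (hpow _).mul_const _
  refine (((hpow _).mul ((hpow _).const_add 1)).mul (hW.hasDerivAt.comp t hρ)).congr_deriv ?_
  simp only [Function.comp_apply, Pi.mul_apply, Real.rpow_sub ht, Real.rpow_one]
  rw [show -(1:ℝ)/β = (-(1:ℝ)/β - 1) + 1 by ring, Real.rpow_add ht, Real.rpow_one]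
  field_simp
  ring

theorem stmt_8_general (d : ℕ) (α β s : ℝ) (hα : α ∈ Ioo (0:ℝ) 2)
    (hs : 0 ≤ s) (hcrit : 1/β + s/α < ((d:ℝ) + α)/α)
    (c₁ : ℝ) (D : EuclideanSpace ℝ (Fin d) → ℝ)
    (hD : ∀ u : EuclideanSpace ℝ (Fin d), 2 ≤ ‖u‖ →
      D u ≤ c₁ / (1 + ‖u‖ ^ ((d:ℝ) + α))) :
    ∃ R₁ : ℝ, 2 ≤ R₁ ∧ ∀ t > (0:ℝ), ∀ x : EuclideanSpace ℝ (Fin d),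
      R₁ ≤ t ^ (-(1:ℝ)/α) * ‖x‖ →
      0 ≤ deriv (fun τ => wfn d α β s τ x) t -
          t ^ (-(1:ℝ)/β - 1) * (1 + t ^ (-s/α)) * D ((t ^ (-(1:ℝ)/α)) • x) := by
  obtain ⟨R, hR⟩ := eventually_atTop.mp (eventually_Wfn_supersolution d hα.1 hcrit c₁)
  refine ⟨max 2 R, le_max_left _ _, fun t ht x hx => ?_⟩
  set ρ := t ^ (-(1:ℝ)/α) * ‖x‖
  have hρ : 0 < ρ := by linarith [le_max_left 2 R]
  rw [(hasDerivAt_wfn d α β s ht x (hasDerivAt_Wfn d α hρ).differentiableAt).deriv]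
  have hnorm : ‖t ^ (-(1:ℝ)/α) • x‖ = ρ := by
    rw [norm_smul, Real.norm_of_nonneg (Real.rpow_nonneg ht.le _)]
  have hDρ := hD _ (by rw [hnorm]; exact (le_max_left _ _).trans hx)
  rw [hnorm] at hDρ
  have hsuper := hR ρ ((le_max_right _ _).trans hx)
  have hsW : 0 ≤ s / α * Wfn d α ρ := mul_nonneg (div_nonneg hs hα.1.le) (Wfn_nonneg d α hρ.le)
  have hT : 0 < t ^ (-(1:ℝ)/β - 1) := Real.rpow_pos_of_pos ht _
  have hθ : 0 < 1 + t ^ (-s/α) := add_pos one_pos (Real.rpow_pos_of_pos ht _)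
  rw [mul_assoc (t ^ (-(1:ℝ)/β - 1)), ← mul_sub]
  refine mul_nonneg hT.le ?_
  linear_combination hsW + mul_le_mul_of_nonneg_left hDρ hθ.le +
    mul_nonpos_of_nonneg_of_nonpos hθ.le hsuper

/-- Far-region supersolution inequality: if `D` (playing the role of
`Δ_α V`) satisfies `D(u) ≤ c₁/(1+|u|^{d+α})` for `|u| ≥ 2`, then there is `R₁ ≥ 2` such
that `∂_t w_t(x) - t^{-1/β-1}(1+t^{-s/α}) D(t^{-1/α} x) ≥ 0` whenever
`t^{-1/α}|x| ≥ R₁`. -/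
theorem stmt_8 (d : ℕ) (hd : 0 < d) (α β s : ℝ) (hα : α ∈ Ioo (0:ℝ) 2)
    (hβ : 0 < β) (hs : 0 ≤ s) (hcrit : 1/β + s/α < ((d:ℝ) + α)/α)
    (c₁ : ℝ) (hc₁ : 0 < c₁) (D : EuclideanSpace ℝ (Fin d) → ℝ)
    (hD : ∀ u : EuclideanSpace ℝ (Fin d), 2 ≤ ‖u‖ →
      D u ≤ c₁ / (1 + ‖u‖ ^ ((d:ℝ) + α))) :
    ∃ R₁ : ℝ, 2 ≤ R₁ ∧ ∀ t > (0:ℝ), ∀ x : EuclideanSpace ℝ (Fin d),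
      R₁ ≤ t ^ (-(1:ℝ)/α) * ‖x‖ →
      0 ≤ deriv (fun τ => wfn d α β s τ x) t -
          t ^ (-(1:ℝ)/β - 1) * (1 + t ^ (-s/α)) * D ((t ^ (-(1:ℝ)/α)) • x) :=
  stmt_8_general d α β s hα hs hcrit c₁ D hD
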